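/- arXiv:1602.05091 — 6 statements merged into one kernel-verified Lean document; each statement's English description precedes it below -/
import Mathlib

section
/- Let g be a 4-dimensional real Lie algebra with basis e1,e2,e3,e4 and nonzero brackets [e1,e2]=e3, [e4,e1]=e2, [e4,e2]=e1, graded by deg(e1)=deg(e2)=-1, deg(e3)=-2, deg(e4)=0. Then any linear map φ: g_{-1}⊕g_{-2} → g_0⊕g_{-1} raising degree by 1 (i.e. φ(g_{-1})⊆g_0, φ(g_{-2})⊆g_{-1}) and satisfying the derivation property φ([X,Y])=[φ(X),Y]+[X,φ(Y)] for all X,Y in g_{-1}⊕g_{-2} is identically zero. -/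
/-!
A degree-one derivation sends `e1, e2` to multiples `a e4, b e4`. The relation `[e1,e2] = e3`
then forces `φ(e3) = a e1 - b e2`, and the relations `[e1,e3] = [e2,e3] = 0` give
`[e1, φ(e3)] = -b e3 = 0` and `[e2, φ(e3)] = -a e3 = 0`, so `a = b = 0`.
-/

/-- The bracket relations of the semidirect product of the Heisenberg algebra `span {x, y, z}`
with the derivation `ad w`, which swaps `x` and `y` and kills `z`. -/
structure IsHeisenbergFrame {L : Type*} [LieRing L] (x y z w : L) : Prop where
  lie_x_y : ⁅x, y⁆ = z
  lie_x_z : ⁅x, z⁆ = 0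
  lie_y_z : ⁅y, z⁆ = 0
  lie_w_x : ⁅w, x⁆ = y
  lie_w_y : ⁅w, y⁆ = x
  lie_w_z : ⁅w, z⁆ = 0

namespace IsHeisenbergFrame

variable {R L : Type*} [CommRing R] [LieRing L] [LieAlgebra R L] {x y z w : L}
  {φ : L →ₗ[R] L} {a b : R}

theorem map_z_eq (hF : IsHeisenbergFrame x y z w) (hx : φ x = a • w) (hy : φ y = b • w)
    (hder : φ ⁅x, y⁆ = ⁅φ x, y⁆ + ⁅x, φ y⁆) : φ z = a • x - b • y := by
  rw [← hF.lie_x_y, hder, hx, hy, smul_lie, lie_smul, hF.lie_w_y, ← lie_skew, hF.lie_w_x,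
    smul_neg, sub_eq_add_neg]

theorem smul_z_eq_zero (hF : IsHeisenbergFrame x y z w) (hx : φ x = a • w) (hy : φ y = b • w)
    (hxy : φ ⁅x, y⁆ = ⁅φ x, y⁆ + ⁅x, φ y⁆) (hxz : φ ⁅x, z⁆ = ⁅φ x, z⁆ + ⁅x, φ z⁆)
    (hyz : φ ⁅y, z⁆ = ⁅φ y, z⁆ + ⁅y, φ z⁆) : a • z = 0 ∧ b • z = 0 := by
  have hz := hF.map_z_eq hx hy hxy
  have hyx : ⁅y, x⁆ = -z := by rw [← lie_skew, hF.lie_x_y]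
  rw [hF.lie_x_z, map_zero, hx, hz, smul_lie, hF.lie_w_z, lie_sub, lie_smul, lie_smul,
    lie_self, hF.lie_x_y] at hxz
  rw [hF.lie_y_z, map_zero, hy, hz, smul_lie, hF.lie_w_z, lie_sub, lie_smul, lie_smul,
    lie_self, hyx] at hyz
  constructor
  · simpa using hyz.symm
  · simpa using hxz.symm

theorem map_eq_zero [IsDomain R] [Module.IsTorsionFree R L] (hF : IsHeisenbergFrame x y z w) (hz : z ≠ 0)
    (hx : φ x ∈ R ∙ w) (hy : φ y ∈ R ∙ w)
    (hder : ∀ u ∈ ({x, y, z} : Set L), ∀ v ∈ ({x, y, z} : Set L),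
      φ ⁅u, v⁆ = ⁅φ u, v⁆ + ⁅u, φ v⁆) :
    φ x = 0 ∧ φ y = 0 ∧ φ z = 0 := by
  obtain ⟨a, ha⟩ := Submodule.mem_span_singleton.mp hx
  obtain ⟨b, hb⟩ := Submodule.mem_span_singleton.mp hy
  have hxy := hder x (by simp) y (by simp)
  obtain ⟨haz, hbz⟩ := hF.smul_z_eq_zero ha.symm hb.symm hxy (hder x (by simp) z (by simp))
    (hder y (by simp) z (by simp))
  have ha0 : a = 0 := (smul_eq_zero.mp haz).resolve_right hz
  have hb0 : b = 0 := (smul_eq_zero.mp hbz).resolve_right hz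
  refine ⟨?_, ?_, ?_⟩
  · rw [← ha, ha0, zero_smul]
  · rw [← hb, hb0, zero_smul]
  · rw [hF.map_z_eq ha.symm hb.symm hxy, ha0, hb0, zero_smul, zero_smul, sub_zero]

end IsHeisenbergFrame

theorem tanaka_prolongation_vanishes_general
    (L : Type*) [LieRing L] [LieAlgebra ℝ L] (e : Module.Basis (Fin 4) ℝ L)
    (h12 : ⁅e 0, e 1⁆ = e 2) (h13 : ⁅e 0, e 2⁆ = 0) (h23 : ⁅e 1, e 2⁆ = 0)
    (h41 : ⁅e 3, e 0⁆ = e 1) (h42 : ⁅e 3, e 1⁆ = e 0) (h43 : ⁅e 3, e 2⁆ = 0)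
    (φ : L →ₗ[ℝ] L)
    (hφ1 : φ (e 0) ∈ Submodule.span ℝ ({e 3} : Set L))
    (hφ2 : φ (e 1) ∈ Submodule.span ℝ ({e 3} : Set L))
    (hder : ∀ x ∈ Submodule.span ℝ ({e 0, e 1, e 2} : Set L),
        ∀ y ∈ Submodule.span ℝ ({e 0, e 1, e 2} : Set L),
        φ ⁅x, y⁆ = ⁅φ x, y⁆ + ⁅x, φ y⁆) :
    φ (e 0) = 0 ∧ φ (e 1) = 0 ∧ φ (e 2) = 0 :=
  IsHeisenbergFrame.map_eq_zero ⟨h12, h13, h23, h41, h42, h43⟩ (e.ne_zero 2) hφ1 hφ2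
    fun x hx y hy => hder x (Submodule.subset_span hx) y (Submodule.subset_span hy)

/-- The first Tanaka prolongation of the Heisenberg algebra `m = span{e1,e2,e3}`
(with `[e1,e2]=e3`) together with `g₀ = span{e4}` acting by `[e4,e1]=e2`, `[e4,e2]=e1`
vanishes: any degree-one linear map `φ` on `m` (sending `g₋₁` to `g₀` and `g₋₂` to `g₋₁`)
satisfying the derivation property is zero. Here `e 0, e 1, e 2, e 3` play the roles of
`e1, e2, e3, e4`. -/
theorem tanaka_prolongation_vanishes
    (L : Type*) [LieRing L] [LieAlgebra ℝ L] (e : Module.Basis (Fin 4) ℝ L)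
    (h12 : ⁅e 0, e 1⁆ = e 2) (h13 : ⁅e 0, e 2⁆ = 0) (h23 : ⁅e 1, e 2⁆ = 0)
    (h41 : ⁅e 3, e 0⁆ = e 1) (h42 : ⁅e 3, e 1⁆ = e 0) (h43 : ⁅e 3, e 2⁆ = 0)
    (φ : L →ₗ[ℝ] L)
    (hφ1 : φ (e 0) ∈ Submodule.span ℝ ({e 3} : Set L))
    (hφ2 : φ (e 1) ∈ Submodule.span ℝ ({e 3} : Set L))
    (hφ3 : φ (e 2) ∈ Submodule.span ℝ ({e 0, e 1} : Set L))
    (hder : ∀ x ∈ Submodule.span ℝ ({e 0, e 1, e 2} : Set L),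
        ∀ y ∈ Submodule.span ℝ ({e 0, e 1, e 2} : Set L),
        φ ⁅x, y⁆ = ⁅φ x, y⁆ + ⁅x, φ y⁆) :
    φ (e 0) = 0 ∧ φ (e 1) = 0 ∧ φ (e 2) = 0 :=
  tanaka_prolongation_vanishes_general L e h12 h13 h23 h41 h42 h43 φ hφ1 hφ2 hder
end

section
/- Let h = [[a,b],[-b,-a]] with a,b real and b²-a² > 0. Then there exists a unique real t such that conjugation of h by T = [[cosh t, sinh t],[sinh t, cosh t]] yields a matrix of the form [[0,χ],[-χ,0]], namely t = (1/4)·ln((b-a)/(b+a)), and χ = sgn(a+b)·√(b²-a²). -/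
/-!
Conjugating `[[a, b], [-b, -a]]` by the boost of rapidity `t` boosts the vector `(a, b)` by
rapidity `2t`, giving `[[A, B], [-B, -A]]` with `A = a cosh 2t + b sinh 2t` and
`B = a sinh 2t + b cosh 2t`. Since `2 eᵘ (a cosh u + b sinh u) = (a + b) e²ᵘ - (b - a)`,
the diagonal vanishes exactly when `e⁴ᵗ = (b - a)/(b + a)`, which is positive because
`b² - a² > 0`. There `B = A + B = (a + b) e²ᵗ`, and `B² = B² - A² = b² - a²` because boosts
preserve the Minkowski form; so `B = sgn(a + b) √(b² - a²)`.
-/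

open Real

noncomputable abbrev boost (t : ℝ) : Matrix (Fin 2) (Fin 2) ℝ :=
  !![cosh t, sinh t; sinh t, cosh t]

lemma boost_mul (s t : ℝ) : boost s * boost t = boost (s + t) := by
  ext i j
  fin_cases i <;> fin_cases j <;> simp [cosh_add, sinh_add] <;> ring

lemma boost_zero : boost 0 = 1 := by
  ext i j
  fin_cases i <;> fin_cases j <;> simp

lemma boost_inv (t : ℝ) : (boost t)⁻¹ = boost (-t) :=
  Matrix.inv_eq_left_inv (by rw [boost_mul, neg_add_cancel, boost_zero])

lemma boost_inv_mul_mul_boost (a b t : ℝ) :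
    (boost t)⁻¹ * !![a, b; -b, -a] * boost t =
      !![a * cosh (2 * t) + b * sinh (2 * t), a * sinh (2 * t) + b * cosh (2 * t);
        -(a * sinh (2 * t) + b * cosh (2 * t)), -(a * cosh (2 * t) + b * sinh (2 * t))] := by
  rw [boost_inv, cosh_two_mul, sinh_two_mul]
  ext i j
  fin_cases i <;> fin_cases j <;> simp [Matrix.mul_apply] <;> ring

lemma matrix_of_neg_eq_iff {R : Type*} [AddGroup R] (x y χ : R) :
    !![x, y; -y, -x] = !![0, χ; -χ, 0] ↔ x = 0 ∧ y = χ := by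
  simp [and_comm]

lemma mul_cosh_add_mul_sinh_eq_zero_iff (a b u : ℝ) :
    a * cosh u + b * sinh u = 0 ↔ (a + b) * exp (2 * u) = b - a := by
  have hexp : 2 * exp u * (a * cosh u + b * sinh u) = (a + b) * exp (2 * u) + (a - b) := by
    rw [cosh_eq, sinh_eq, exp_neg, two_mul u, exp_add]
    field_simp
    ring
  constructor
  · intro h
    linear_combination -hexp + 2 * exp u * h
  · intro h
    have : 2 * exp u * (a * cosh u + b * sinh u) = 0 := by linear_combination hexp + h
    simpa [(exp_pos u).ne'] using this

lemma mul_sinh_add_mul_cosh_eq_mul_exp_sub (a b u : ℝ) :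
    a * sinh u + b * cosh u = (a + b) * exp u - (a * cosh u + b * sinh u) := by
  rw [← cosh_add_sinh]
  ring

lemma sq_mul_sinh_add_mul_cosh_sub_sq (a b u : ℝ) :
    (a * sinh u + b * cosh u) ^ 2 - (a * cosh u + b * sinh u) ^ 2 = b ^ 2 - a ^ 2 := by
  linear_combination (b ^ 2 - a ^ 2) * cosh_sq_sub_sinh_sq u

lemma Real.sign_mul_abs (x : ℝ) : sign x * |x| = x := by
  rcases lt_trichotomy x 0 with hx | rfl | hx
  · rw [sign_of_neg hx, abs_of_neg hx]; ring
  · simp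
  · rw [sign_of_pos hx, abs_of_pos hx, one_mul]

/-- If `det h = b² - a² > 0` for `h = [[a,b],[-b,-a]]`, there is a unique `t`
such that conjugation by `T = [[cosh t, sinh t],[sinh t, cosh t]]` brings `h` to the form
`[[0,χ],[-χ,0]]`; namely `t = (1/4)·log((b-a)/(b+a))` with `χ = sgn(a+b)·√(b²-a²)`. -/
theorem normal_form_det_pos (a b : ℝ) (h : a ^ 2 < b ^ 2) :
    (∃! t : ℝ, ∃ χ : ℝ,
        (!![Real.cosh t, Real.sinh t; Real.sinh t, Real.cosh t])⁻¹ *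
          !![a, b; -b, -a] *
          !![Real.cosh t, Real.sinh t; Real.sinh t, Real.cosh t] = !![0, χ; -χ, 0]) ∧
    (!![Real.cosh ((1/4) * Real.log ((b - a)/(b + a))),
        Real.sinh ((1/4) * Real.log ((b - a)/(b + a)));
        Real.sinh ((1/4) * Real.log ((b - a)/(b + a))),
        Real.cosh ((1/4) * Real.log ((b - a)/(b + a)))])⁻¹ *
      !![a, b; -b, -a] *
      !![Real.cosh ((1/4) * Real.log ((b - a)/(b + a))),
         Real.sinh ((1/4) * Real.log ((b - a)/(b + a)));
         Real.sinh ((1/4) * Real.log ((b - a)/(b + a))),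
         Real.cosh ((1/4) * Real.log ((b - a)/(b + a)))] =
      !![0, Real.sign (a + b) * Real.sqrt (b ^ 2 - a ^ 2);
         -(Real.sign (a + b) * Real.sqrt (b ^ 2 - a ^ 2)), 0] := by
  have hprod : 0 < (b - a) * (b + a) := by nlinarith
  have hab : b + a ≠ 0 := right_ne_zero_of_mul hprod.ne'
  have hq : 0 < (b - a) / (b + a) := div_pos_iff.2 (mul_pos_iff.1 hprod)
  set t₀ := (1/4) * log ((b - a) / (b + a)) with ht₀
  have hdiag (t : ℝ) : a * cosh (2 * t) + b * sinh (2 * t) = 0 ↔ t = t₀ := by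
    rw [mul_cosh_add_mul_sinh_eq_zero_iff, add_comm a, mul_comm, ← eq_div_iff hab,
      ← exp_log hq, exp_eq_exp, ht₀]
    constructor <;> intro h <;> linarith
  have hoff : a * sinh (2 * t₀) + b * cosh (2 * t₀) = sign (a + b) * √(b ^ 2 - a ^ 2) := by
    have hA := (hdiag t₀).2 rfl
    have hB : a * sinh (2 * t₀) + b * cosh (2 * t₀) = (a + b) * exp (2 * t₀) := by
      rw [mul_sinh_add_mul_cosh_eq_mul_exp_sub, hA, sub_zero]
    rw [← sq_mul_sinh_add_mul_cosh_sub_sq a b (2 * t₀), hA, hB, zero_pow two_ne_zero, sub_zero,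
      sqrt_sq_eq_abs, abs_mul, abs_of_pos (exp_pos _), ← mul_assoc (sign _), Real.sign_mul_abs]
  have hconj : (boost t₀)⁻¹ * !![a, b; -b, -a] * boost t₀ =
      !![0, sign (a + b) * √(b ^ 2 - a ^ 2); -(sign (a + b) * √(b ^ 2 - a ^ 2)), 0] := by
    rw [boost_inv_mul_mul_boost, matrix_of_neg_eq_iff]
    exact ⟨(hdiag t₀).2 rfl, hoff⟩
  refine ⟨⟨t₀, ⟨_, hconj⟩, fun t ⟨χ, ht⟩ => ?_⟩, hconj⟩
  rw [boost_inv_mul_mul_boost, matrix_of_neg_eq_iff] at ht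
  exact (hdiag t).1 ht.1
end

section
/- Let h = [[a,±a],[∓a,-a]] (i.e. b = ±a) with a ≠ 0, and T = [[cosh t, sinh t],[sinh t, cosh t]]. Then T⁻¹ h T = e^{±2t} h. Consequently every nonzero h with det h = 0 of the form [[a,b],[-b,-a]] is SO⁺(1,1)-conjugate to exactly one of [[1,1],[-1,-1]], [[1,-1],[1,-1]], [[-1,1],[-1,1]], [[-1,-1],[1,1]]. -/
/-!
Such an `h` is `a • N` with `N = [[1, ε], [-ε, -1]]`, `ε = ±1`, and `N` is multiplied by
`cosh t + ε sinh t = e^{εt}` both by `T⁻¹` on the left and by `T` on the right. Hence the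
`SO⁺(1,1)`-orbit of `h` is exactly `{c • h | c > 0}`, and its only member with entries `±1`
is `|a|⁻¹ • h`.
-/

open Real

lemma inv_boost (t : ℝ) :
    (!![cosh t, sinh t; sinh t, cosh t])⁻¹ = !![cosh t, -sinh t; -sinh t, cosh t] := by
  rw [Matrix.inv_def, Matrix.det_fin_two_of, Matrix.adjugate_fin_two_of, ← sq, ← sq,
    cosh_sq_sub_sinh_sq, Ring.inverse_one, one_smul]

lemma cosh_add_mul_sinh {ε : ℝ} (hε : ε = 1 ∨ ε = -1) (t : ℝ) :
    cosh t + ε * sinh t = exp (ε * t) := by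
  rcases hε with rfl | rfl
  · simp [cosh_add_sinh]
  · simp [← cosh_sub_sinh, sub_eq_add_neg]

lemma boost_conj_of_det_eq_zero (a t : ℝ) {ε : ℝ} (hε : ε = 1 ∨ ε = -1) :
    (!![cosh t, sinh t; sinh t, cosh t])⁻¹ * !![a, ε * a; -(ε * a), -a] *
        !![cosh t, sinh t; sinh t, cosh t] =
      exp (2 * ε * t) • !![a, ε * a; -(ε * a), -a] := by
  have hε2 : ε ^ 2 = 1 := by rcases hε with rfl | rfl <;> norm_num
  have hexp : exp (2 * ε * t) = (cosh t + ε * sinh t) ^ 2 := by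
    rw [cosh_add_mul_sinh hε, ← exp_nat_mul]; ring_nf
  rw [inv_boost, hexp]
  ext i j
  fin_cases i <;> fin_cases j <;> simp [Matrix.mul_apply, Fin.sum_univ_two] <;> grind

def nullNormalForms : Set (Matrix (Fin 2) (Fin 2) ℝ) :=
  {!![1, 1; -1, -1], !![1, -1; 1, -1], !![-1, 1; -1, 1], !![-1, -1; 1, 1]}

lemma abs_apply_zero_zero_of_mem_nullNormalForms {M : Matrix (Fin 2) (Fin 2) ℝ}
    (hM : M ∈ nullNormalForms) : |M 0 0| = 1 := by
  rcases hM with rfl | rfl | rfl | rfl <;> simp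

lemma inv_abs_smul_mem_nullNormalForms {a ε : ℝ} (ha : a ≠ 0) (hε : ε = 1 ∨ ε = -1) :
    |a|⁻¹ • !![a, ε * a; -(ε * a), -a] ∈ nullNormalForms := by
  have hsign : |a|⁻¹ * a = 1 ∨ |a|⁻¹ * a = -1 := by
    rcases ha.lt_or_gt with h | h
    · right; rw [abs_of_neg h]; field_simp
    · left; rw [abs_of_pos h]; field_simp
  simp only [nullNormalForms, Set.mem_insert_iff, Set.mem_singleton_iff]
  rcases hε with rfl | rfl <;> rcases hsign with h | h <;> simp [h]

lemma exists_sign_mul_of_sq_eq_sq {a b : ℝ} (h : b ^ 2 = a ^ 2) :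
    ∃ ε : ℝ, (ε = 1 ∨ ε = -1) ∧ b = ε * a := by
  rcases sq_eq_sq_iff_eq_or_eq_neg.mp h with h | h
  · exact ⟨1, .inl rfl, by rw [h, one_mul]⟩
  · exact ⟨-1, .inr rfl, by rw [h, neg_one_mul]⟩

lemma exists_exp_eq {ε : ℝ} (hε : ε = 1 ∨ ε = -1) {c : ℝ} (hc : 0 < c) :
    ∃ t, exp (2 * ε * t) = c := by
  refine ⟨ε * log c / 2, ?_⟩
  have hε2 : ε * ε = 1 := by rcases hε with rfl | rfl <;> norm_num
  rw [show 2 * ε * (ε * log c / 2) = log c by linear_combination log c * hε2, exp_log hc]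

/-- For `h = [[a, εa],[-εa, -a]]` with `ε = ±1`, conjugation by
`T = [[cosh t, sinh t],[sinh t, cosh t]]` gives `e^{2εt}·h`. Consequently every nonzero
`h = [[a,b],[-b,-a]]` with `det h = 0` (i.e. `b² = a²`, `a ≠ 0`) is `SO⁺(1,1)`-conjugate to
exactly one of the four matrices `[[1,1],[-1,-1]]`, `[[1,-1],[1,-1]]`, `[[-1,1],[-1,1]]`,
`[[-1,-1],[1,1]]`. -/
theorem det_zero_normal_forms :
    (∀ (a t ε : ℝ), ε = 1 ∨ ε = -1 →
      (!![Real.cosh t, Real.sinh t; Real.sinh t, Real.cosh t])⁻¹ *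
          !![a, ε * a; -(ε * a), -a] *
          !![Real.cosh t, Real.sinh t; Real.sinh t, Real.cosh t] =
        Real.exp (2 * ε * t) • !![a, ε * a; -(ε * a), -a]) ∧
    (∀ a b : ℝ, b ^ 2 = a ^ 2 → a ≠ 0 →
      ∃! M : Matrix (Fin 2) (Fin 2) ℝ,
        M ∈ ({!![1, 1; -1, -1], !![1, -1; 1, -1], !![-1, 1; -1, 1], !![-1, -1; 1, 1]} :
            Set (Matrix (Fin 2) (Fin 2) ℝ)) ∧
        ∃ t : ℝ,
          (!![Real.cosh t, Real.sinh t; Real.sinh t, Real.cosh t])⁻¹ *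
              !![a, b; -b, -a] *
              !![Real.cosh t, Real.sinh t; Real.sinh t, Real.cosh t] = M) := by
  refine ⟨fun a t ε hε ↦ boost_conj_of_det_eq_zero a t hε, fun a b hsq ha ↦ ?_⟩
  obtain ⟨ε, hε, rfl⟩ := exists_sign_mul_of_sq_eq_sq hsq
  obtain ⟨t₀, ht₀⟩ := exists_exp_eq hε (inv_pos.mpr (abs_pos.mpr ha))
  refine ⟨|a|⁻¹ • !![a, ε * a; -(ε * a), -a],
    ⟨inv_abs_smul_mem_nullNormalForms ha hε, t₀, by rw [boost_conj_of_det_eq_zero a t₀ hε, ht₀]⟩,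
    ?_⟩
  rintro M ⟨hM, t, rfl⟩
  rw [boost_conj_of_det_eq_zero a t hε] at hM ⊢
  have hunit : exp (2 * ε * t) * |a| = 1 := by
    simpa [abs_mul, (exp_pos _).le] using abs_apply_zero_zero_of_mem_nullNormalForms hM
  rw [eq_inv_of_mul_eq_one_left hunit]
end

section
/- Consider a bracket on ℝ³ with basis X1,X2,X3 defined by [X1,X3]=X1+pX2, [X2,X3]=(p+ε)X1−X2, [X1,X2]=rX1+sX2+X3, where ε ∈ {2,−2}. The Jacobi identity holds if and only if r(1+p(p+ε)) = 0 and s = rp. -/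
/-!
The Jacobiator `J` of an alternating bracket is trilinear and alternating, so on `R³` it equals
`det (x, y, z) • J (X₁, X₂, X₃)`; the Jacobi identity therefore amounts to the single equation
`J (X₁, X₂, X₃) = 0`. From the structure constants,
`J (X₁, X₂, X₃) = -(r + s (p + ε)) X₁ + (s - r p) X₂`, and substituting `s = r p` into the
first coordinate gives `r (1 + p (p + ε))`.
-/

section Jacobiator

variable {R M : Type*} [CommRing R] [AddCommGroup M] [Module R M]

def jacobiator (B : M →ₗ[R] M →ₗ[R] M) (x y z : M) : M :=
  B x (B y z) + B y (B z x) + B z (B x y)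

variable (B : M →ₗ[R] M →ₗ[R] M)

lemma jacobiator_cycle (x y z : M) : jacobiator B x y z = jacobiator B y z x := by
  unfold jacobiator; abel

lemma jacobiator_add_left (x x' y z : M) :
    jacobiator B (x + x') y z = jacobiator B x y z + jacobiator B x' y z := by
  simp only [jacobiator, map_add, LinearMap.add_apply]; abel

lemma jacobiator_smul_left (c : R) (x y z : M) :
    jacobiator B (c • x) y z = c • jacobiator B x y z := by
  simp only [jacobiator, map_smul, LinearMap.smul_apply, smul_add]

lemma jacobiator_add_middle (x y y' z : M) :
    jacobiator B x (y + y') z = jacobiator B x y z + jacobiator B x y' z := by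
  rw [jacobiator_cycle B x, jacobiator_add_left, ← jacobiator_cycle B x, ← jacobiator_cycle B x]

lemma jacobiator_smul_middle (c : R) (x y z : M) :
    jacobiator B x (c • y) z = c • jacobiator B x y z := by
  rw [jacobiator_cycle B x, jacobiator_smul_left, ← jacobiator_cycle B x]

lemma jacobiator_add_right (x y z z' : M) :
    jacobiator B x y (z + z') = jacobiator B x y z + jacobiator B x y z' := by
  rw [← jacobiator_cycle B (z + z'), jacobiator_add_left, jacobiator_cycle B z,
    jacobiator_cycle B z']

lemma jacobiator_smul_right (c : R) (x y z : M) :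
    jacobiator B x y (c • z) = c • jacobiator B x y z := by
  rw [← jacobiator_cycle B (c • z), jacobiator_smul_left, jacobiator_cycle B z]

variable {B}

lemma LinearMap.IsAlt.jacobiator_self_left (hB : B.IsAlt) (x z : M) :
    jacobiator B x x z = 0 := by
  rw [jacobiator, hB.self_eq_zero, map_zero, ← hB.neg x z, map_neg]
  abel

lemma LinearMap.IsAlt.jacobiator_swap (hB : B.IsAlt) (x y z : M) :
    jacobiator B y x z = -jacobiator B x y z := by
  rw [jacobiator, jacobiator, ← hB.neg z x, ← hB.neg y z, ← hB.neg x y]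
  simp only [map_neg]
  abel

end Jacobiator

section Dimension3

variable {R : Type*} [CommRing R] {B : (Fin 3 → R) →ₗ[R] (Fin 3 → R) →ₗ[R] (Fin 3 → R)}

lemma LinearMap.IsAlt.jacobiator_eq_det_smul (hB : B.IsAlt) (x y z : Fin 3 → R) :
    jacobiator B x y z =
      (Matrix.of ![x, y, z]).det • jacobiator B ![1, 0, 0] ![0, 1, 0] ![0, 0, 1] := by
  have hdec : ∀ v : Fin 3 → R, v = v 0 • ![1, 0, 0] + v 1 • ![0, 1, 0] + v 2 • ![0, 0, 1] := by
    intro v; funext i; fin_cases i <;> simp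
  set e₀ : Fin 3 → R := ![1, 0, 0]
  set e₁ : Fin 3 → R := ![0, 1, 0]
  set e₂ : Fin 3 → R := ![0, 0, 1]
  have h120 : jacobiator B e₁ e₂ e₀ = jacobiator B e₀ e₁ e₂ := (jacobiator_cycle B _ _ _).symm
  have h201 : jacobiator B e₂ e₀ e₁ = jacobiator B e₀ e₁ e₂ := jacobiator_cycle B _ _ _
  have h102 : jacobiator B e₁ e₀ e₂ = -jacobiator B e₀ e₁ e₂ := hB.jacobiator_swap _ _ _
  have h210 : jacobiator B e₂ e₁ e₀ = -jacobiator B e₀ e₁ e₂ := by rw [hB.jacobiator_swap, h120]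
  have h021 : jacobiator B e₀ e₂ e₁ = -jacobiator B e₀ e₁ e₂ := by rw [hB.jacobiator_swap, h201]
  have hself_middle : ∀ u v, jacobiator B u v v = 0 := fun u v => by
    rw [jacobiator_cycle]; exact hB.jacobiator_self_left v u
  have hself_outer : ∀ u v, jacobiator B u v u = 0 := fun u v => by
    rw [← jacobiator_cycle]; exact hB.jacobiator_self_left u v
  conv_lhs => rw [hdec x, hdec y, hdec z]
  simp only [jacobiator_add_left, jacobiator_add_middle, jacobiator_add_right,
    jacobiator_smul_left, jacobiator_smul_middle, jacobiator_smul_right, h120, h201, h102, h210,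
    h021, hB.jacobiator_self_left, hself_middle, hself_outer, smul_zero, add_zero, zero_add,
    Matrix.det_fin_three, Matrix.of_apply, Matrix.cons_val_zero, Matrix.cons_val_one,
    Matrix.cons_val_two, Matrix.tail_cons, Matrix.head_cons]
  module

lemma LinearMap.IsAlt.forall_jacobiator_eq_zero_iff (hB : B.IsAlt) :
    (∀ x y z, jacobiator B x y z = 0) ↔ jacobiator B ![1, 0, 0] ![0, 1, 0] ![0, 0, 1] = 0 :=
  ⟨fun h => h _ _ _, fun h x y z => by rw [hB.jacobiator_eq_det_smul, h, smul_zero]⟩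

lemma LinearMap.IsAlt.jacobiator_basis_eq (hB : B.IsAlt) {p r s ε : R}
    (h13 : B ![1, 0, 0] ![0, 0, 1] = ![1, 0, 0] + p • ![0, 1, 0])
    (h23 : B ![0, 1, 0] ![0, 0, 1] = (p + ε) • ![1, 0, 0] - ![0, 1, 0])
    (h12 : B ![1, 0, 0] ![0, 1, 0] = r • ![1, 0, 0] + s • ![0, 1, 0] + ![0, 0, 1]) :
    jacobiator B ![1, 0, 0] ![0, 1, 0] ![0, 0, 1] = ![-(r + s * (p + ε)), s - r * p, 0] := by
  have h31 : B ![0, 0, 1] ![1, 0, 0] = -(![1, 0, 0] + p • ![0, 1, 0]) := by rw [← hB.neg, h13]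
  have h32 : B ![0, 0, 1] ![0, 1, 0] = -((p + ε) • ![1, 0, 0] - ![0, 1, 0]) := by
    rw [← hB.neg, h23]
  have h21 : B ![0, 1, 0] ![1, 0, 0] = -(r • ![1, 0, 0] + s • ![0, 1, 0] + ![0, 0, 1]) := by
    rw [← hB.neg, h12]
  simp only [jacobiator, h12, h23, h31, h21, h32, map_add, map_sub, map_neg, map_smul,
    hB.self_eq_zero]
  ext i; fin_cases i <;> simp <;> ring

end Dimension3

theorem jacobi_iff_case_det_h_zero_general (p r s ε : ℝ)
    (B : (Fin 3 → ℝ) →ₗ[ℝ] (Fin 3 → ℝ) →ₗ[ℝ] (Fin 3 → ℝ))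
    (hskew : ∀ x y, B x y = -B y x)
    (h13 : B ![1, 0, 0] ![0, 0, 1] = ![1, 0, 0] + p • ![0, 1, 0])
    (h23 : B ![0, 1, 0] ![0, 0, 1] = (p + ε) • ![1, 0, 0] - ![0, 1, 0])
    (h12 : B ![1, 0, 0] ![0, 1, 0] = r • ![1, 0, 0] + s • ![0, 1, 0] + ![0, 0, 1]) :
    (∀ x y z, B x (B y z) + B y (B z x) + B z (B x y) = 0) ↔
      (r * (1 + p * (p + ε)) = 0 ∧ s = r * p) := by
  have hB : B.IsAlt := fun x => self_eq_neg.mp (hskew x x)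
  change (∀ x y z, jacobiator B x y z = 0) ↔ _
  rw [hB.forall_jacobiator_eq_zero_iff, hB.jacobiator_basis_eq h13 h23 h12]
  simp only [Matrix.cons_eq_zero_iff, Matrix.zero_empty, and_true, neg_eq_zero, sub_eq_zero]
  constructor <;> rintro ⟨h, rfl⟩ <;> exact ⟨by linear_combination h, rfl⟩

/-- For the bilinear antisymmetric bracket on ℝ³ with `[X1,X3]=X1+pX2`,
`[X2,X3]=(p+ε)X1−X2`, `[X1,X2]=rX1+sX2+X3` and `ε = ±2`, the Jacobi identity holds iff
`r(1+p(p+ε)) = 0` and `s = rp`. -/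
theorem jacobi_iff_case_det_h_zero (p r s ε : ℝ) (hε : ε = 2 ∨ ε = -2)
    (B : (Fin 3 → ℝ) →ₗ[ℝ] (Fin 3 → ℝ) →ₗ[ℝ] (Fin 3 → ℝ))
    (hskew : ∀ x y, B x y = -B y x)
    (h13 : B ![1, 0, 0] ![0, 0, 1] = ![1, 0, 0] + p • ![0, 1, 0])
    (h23 : B ![0, 1, 0] ![0, 0, 1] = (p + ε) • ![1, 0, 0] - ![0, 1, 0])
    (h12 : B ![1, 0, 0] ![0, 1, 0] = r • ![1, 0, 0] + s • ![0, 1, 0] + ![0, 0, 1]) :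
    (∀ x y z, B x (B y z) + B y (B z x) + B z (B x y) = 0) ↔
      (r * (1 + p * (p + ε)) = 0 ∧ s = r * p) :=
  jacobi_iff_case_det_h_zero_general p r s ε B hskew h13 h23 h12
end

section
/- Let g be the 3-dimensional real Lie algebra with basis X1,X2,X3 and brackets [X1,X3]=X1+X2, [X2,X3]=−(X1+X2), [X1,X2]=τ(X1+X2)+X3. Then the derived algebra g' = [g,g] is spanned by {X1+X2, X3}, it is a 2-dimensional abelian ideal, and the matrix of ad_{X1} restricted to g' in this basis is [[τ,1],[1,0]], whose eigenvalues are (τ ± √(τ²+4))/2. -/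
/-!
The three structure brackets lie in `span {X1 + X2, X3}`, and conversely `X1 + X2 = [X1, X3]` and
`X3 = [X1, X2] - τ [X1, X3]` are brackets, so this span is the derived algebra; it is abelian
because `[X1 + X2, X3] = 0`. The characteristic polynomial `X² - τX - 1` of `[[τ, 1], [1, 0]]`
has discriminant `τ² + 4 > 0`, whence its two real roots.
-/

open Polynomial

section LieBracketSpan

variable {R L : Type*} [CommRing R] [LieRing L] [LieAlgebra R L]

theorem lie_mem_of_mem_span {s t : Set L} {P : Submodule R L}
    (h : ∀ x ∈ s, ∀ y ∈ t, ⁅x, y⁆ ∈ P) {x y : L}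
    (hx : x ∈ Submodule.span R s) (hy : y ∈ Submodule.span R t) : ⁅x, y⁆ ∈ P := by
  have hle : Submodule.map₂ (LieModule.toEnd R L L) (Submodule.span R s)
      (Submodule.span R t) ≤ P := by
    rw [Submodule.map₂_span_span, Submodule.span_le]
    rintro _ ⟨x, hx, y, hy, rfl⟩
    exact h x hx y hy
  exact hle (Submodule.apply_mem_map₂ _ hx hy)

theorem lie_eq_zero_of_mem_span_pair {u w x y : L} (huw : ⁅u, w⁆ = 0)
    (hx : x ∈ Submodule.span R {u, w}) (hy : y ∈ Submodule.span R {u, w}) : ⁅x, y⁆ = 0 := by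
  have hgen : ∀ x ∈ ({u, w} : Set L), ∀ y ∈ ({u, w} : Set L), ⁅x, y⁆ ∈ (⊥ : Submodule R L) := by
    have hwu : ⁅w, u⁆ = 0 := by rw [← lie_skew, huw, neg_zero]
    rintro _ (rfl | rfl) _ (rfl | rfl) <;> simp [huw, hwu]
  simpa using lie_mem_of_mem_span hgen hx hy

theorem toSubmodule_lie_top_top_le_of_basis {ι : Type*} (b : Module.Basis ι R L)
    {P : Submodule R L} (h : ∀ i j, ⁅b i, b j⁆ ∈ P) :
    LieSubmodule.toSubmodule ⁅(⊤ : LieIdeal R L), (⊤ : LieIdeal R L)⁆ ≤ P := by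
  rw [LieSubmodule.lieIdeal_oper_eq_linear_span', Submodule.span_le]
  rintro _ ⟨x, -, y, -, rfl⟩
  refine lie_mem_of_mem_span ?_ (b.mem_span x) (b.mem_span y)
  rintro _ ⟨i, rfl⟩ _ ⟨j, rfl⟩
  exact h i j

end LieBracketSpan

theorem Module.Basis.linearIndependent_add_pair {R M ι : Type*} [CommRing R] [AddCommGroup M]
    [Module R M] (b : Module.Basis ι R M) {i j k : ι} (hij : i ≠ j) (hik : i ≠ k)
    (hjk : j ≠ k) : LinearIndependent R ![b i + b j, b k] := by
  rw [LinearIndependent.pair_iff]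
  intro s t hst
  have hcoord := fun l ↦ congrArg (fun v ↦ b.repr v l) hst
  simp only [smul_add, map_add, map_smul, Module.Basis.repr_self, Finsupp.add_apply,
    Finsupp.smul_apply, map_zero, Finsupp.zero_apply] at hcoord
  have hi := hcoord i
  have hk := hcoord k
  simp [hij, hik, hik.symm, hjk.symm] at hi hk
  exact ⟨hi, hk⟩

theorem finrank_span_pair_eq_two {R M : Type*} [CommRing R] [Nontrivial R] [AddCommGroup M]
    [Module R M] {x y : M} (h : LinearIndependent R ![x, y]) :
    Module.finrank R (Submodule.span R {x, y}) = 2 := by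
  rw [← Matrix.range_cons_cons_empty x y ![], finrank_span_eq_card h, Fintype.card_fin]

theorem X_sq_sub_C_mul_X_add_C_eq_mul {K : Type*} [Field K] [NeZero (2 : K)] {a c s : K}
    (hs : discrim 1 (-a) c = s * s) :
    X ^ 2 - C a * X + C c = (X - C ((a + s) / 2)) * (X - C ((a - s) / 2)) := by
  have hsum : (a + s) / 2 + (a - s) / 2 = a := by field_simp; ring
  have hprod : (a + s) / 2 * ((a - s) / 2) = c := by
    rw [discrim] at hs
    field_simp
    linear_combination hs
  calc X ^ 2 - C a * X + C c
      = X ^ 2 - C ((a + s) / 2 + (a - s) / 2) * X + C ((a + s) / 2 * ((a - s) / 2)) := by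
        rw [hsum, hprod]
    _ = _ := by rw [C_add, C_mul]; ring

section ThreeDimensional

variable {R L : Type*} [CommRing R] [LieRing L] [LieAlgebra R L] {e : Fin 3 → L} {τ : R}

theorem lie_mem_span_add_pair (h13 : ⁅e 0, e 2⁆ = e 0 + e 1) (h23 : ⁅e 1, e 2⁆ = -(e 0 + e 1))
    (h12 : ⁅e 0, e 1⁆ = τ • (e 0 + e 1) + e 2) (i j : Fin 3) :
    ⁅e i, e j⁆ ∈ Submodule.span R ({e 0 + e 1, e 2} : Set L) := by
  set P := Submodule.span R ({e 0 + e 1, e 2} : Set L)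
  have hu : e 0 + e 1 ∈ P := Submodule.subset_span (by simp)
  have hw : e 2 ∈ P := Submodule.subset_span (by simp)
  have h01 : ⁅e 0, e 1⁆ ∈ P := h12 ▸ P.add_mem (P.smul_mem τ hu) hw
  have h02 : ⁅e 0, e 2⁆ ∈ P := h13 ▸ hu
  have h12' : ⁅e 1, e 2⁆ ∈ P := h23 ▸ P.neg_mem hu
  fin_cases i <;> fin_cases j <;>
    simp only [Fin.zero_eta, Fin.mk_one, Fin.reduceFinMk, lie_self, P.zero_mem] <;>
    first | assumption | (rw [← lie_skew]; exact P.neg_mem ‹_›)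

theorem span_add_pair_le_lie_top_top (h13 : ⁅e 0, e 2⁆ = e 0 + e 1)
    (h12 : ⁅e 0, e 1⁆ = τ • (e 0 + e 1) + e 2) :
    Submodule.span R ({e 0 + e 1, e 2} : Set L) ≤
      LieSubmodule.toSubmodule ⁅(⊤ : LieIdeal R L), (⊤ : LieIdeal R L)⁆ := by
  have hmem (x y : L) : ⁅x, y⁆ ∈ ⁅(⊤ : LieIdeal R L), (⊤ : LieIdeal R L)⁆ :=
    LieSubmodule.lie_mem_lie trivial trivial
  have he2 : e 2 = ⁅e 0, e 1⁆ - τ • ⁅e 0, e 2⁆ := by rw [h12, h13]; abel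
  rw [Submodule.span_le]
  rintro x (rfl | rfl)
  · exact h13 ▸ hmem _ _
  · rw [he2]
    exact sub_mem (hmem _ _) (SMulMemClass.smul_mem τ (hmem _ _))

end ThreeDimensional

/-- For the Lie algebra with `[X1,X3]=X1+X2`, `[X2,X3]=−(X1+X2)`, `[X1,X2]=τ(X1+X2)+X3`:
the derived algebra is `span{X1+X2, X3}`, a 2-dimensional abelian ideal, and
`ad_{X1}` restricted to it has matrix `[[τ,1],[1,0]]` with eigenvalues `(τ ± √(τ²+4))/2`. -/
theorem case_det_h_zero_solution_one (L : Type*) [LieRing L] [LieAlgebra ℝ L]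
    (b : Module.Basis (Fin 3) ℝ L) (τ : ℝ)
    (h13 : ⁅b 0, b 2⁆ = b 0 + b 1) (h23 : ⁅b 1, b 2⁆ = -(b 0 + b 1))
    (h12 : ⁅b 0, b 1⁆ = τ • (b 0 + b 1) + b 2) :
    (LieSubmodule.toSubmodule ⁅(⊤ : LieIdeal ℝ L), (⊤ : LieIdeal ℝ L)⁆ =
        Submodule.span ℝ ({b 0 + b 1, b 2} : Set L)) ∧
    (∀ x ∈ Submodule.span ℝ ({b 0 + b 1, b 2} : Set L),
      ∀ y ∈ Submodule.span ℝ ({b 0 + b 1, b 2} : Set L), ⁅x, y⁆ = 0) ∧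
    Module.finrank ℝ (Submodule.span ℝ ({b 0 + b 1, b 2} : Set L)) = 2 ∧
    ⁅b 0, b 0 + b 1⁆ = τ • (b 0 + b 1) + b 2 ∧
    ⁅b 0, b 2⁆ = b 0 + b 1 ∧
    (!![τ, 1; 1, 0] : Matrix (Fin 2) (Fin 2) ℝ).charpoly =
      (X - C ((τ + Real.sqrt (τ ^ 2 + 4)) / 2)) *
        (X - C ((τ - Real.sqrt (τ ^ 2 + 4)) / 2)) := by
  have hdiscrim : discrim 1 (-τ) (-1) = √(τ ^ 2 + 4) * √(τ ^ 2 + 4) := by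
    rw [Real.mul_self_sqrt (by positivity), discrim]; ring
  refine ⟨le_antisymm (toSubmodule_lie_top_top_le_of_basis b (lie_mem_span_add_pair h13 h23 h12))
      (span_add_pair_le_lie_top_top h13 h12),
    fun x hx y hy ↦ lie_eq_zero_of_mem_span_pair (by rw [add_lie, h13, h23, add_neg_cancel]) hx hy,
    finrank_span_pair_eq_two (b.linearIndependent_add_pair (by decide) (by decide) (by decide)),
    by rw [lie_add, lie_self, zero_add, h12], h13, ?_⟩
  rw [Matrix.charpoly_fin_two, ← X_sq_sub_C_mul_X_add_C_eq_mul hdiscrim]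
  simp [Matrix.trace_fin_two, Matrix.det_fin_two]
end

section
/- Let g be a real 3-dimensional Lie algebra with dim[g,g] = 1, spanned by Z, such that [g,[g,g]] ≠ 0. Then g is isomorphic to aff(ℝ)⊕ℝ, i.e. there is a basis E1,E2,E3 with [E1,E2]=E1, [E1,E3]=0, [E2,E3]=0. -/
/-!
Let `Z` span the derived algebra. If `[x, [y, z]] ≠ 0` then `ad x` acts on `Z` by a nonzero
scalar, so a multiple `E` of `x` satisfies `[Z, E] = Z`. Since `ad Z` and `ad E` both take
values in the line `ℝ Z`, their common kernel has codimension at most two and so contains a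
nonzero `W`. Bracketing a linear relation between `Z, E, W` with `Z` and then with `E` shows
that these three vectors are independent, hence a basis with the required brackets.
-/

namespace LieAlgebra

variable {K L : Type*} [Field K] [LieRing L] [LieAlgebra K L]

theorem exists_ne_zero_forall_lie_mem_span_singleton
    (h : Module.finrank K
      (LieSubmodule.toSubmodule ⁅(⊤ : LieIdeal K L), (⊤ : LieIdeal K L)⁆) = 1) :
    ∃ Z : L, Z ≠ 0 ∧ ∀ x y : L, ⁅x, y⁆ ∈ K ∙ Z := by
  obtain ⟨Z, -, hZ0, hle⟩ :=
    (rank_submodule_eq_one_iff _).mp (Module.rank_eq_one_iff_finrank_eq_one.mpr h)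
  exact ⟨Z, hZ0, fun x y ↦
    hle (LieSubmodule.lie_mem_lie (LieSubmodule.mem_top x) (LieSubmodule.mem_top y))⟩

theorem exists_lie_eq_self_of_lie_lie_ne_zero {Z : L} (hZ : ∀ x y : L, ⁅x, y⁆ ∈ K ∙ Z)
    (hnc : ∃ x y z : L, ⁅x, ⁅y, z⁆⁆ ≠ 0) : ∃ E : L, ⁅Z, E⁆ = Z := by
  obtain ⟨x, y, z, hxyz⟩ := hnc
  obtain ⟨c, hc⟩ := Submodule.mem_span_singleton.mp (hZ y z)
  obtain ⟨a, ha⟩ := Submodule.mem_span_singleton.mp (hZ x Z)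
  have ha0 : a ≠ 0 := by
    rintro rfl
    rw [← hc, lie_smul, ← ha, zero_smul, smul_zero] at hxyz
    exact hxyz rfl
  refine ⟨(-a⁻¹) • x, ?_⟩
  rw [lie_smul, ← lie_skew, ← ha, smul_neg, neg_smul, neg_neg, smul_smul, inv_mul_cancel₀ ha0,
    one_smul]

theorem exists_ne_zero_lie_eq_zero_and_lie_eq_zero [FiniteDimensional K L]
    (hL : 2 < Module.finrank K L) {Z : L} (hZ : ∀ x y : L, ⁅x, y⁆ ∈ K ∙ Z)
    (x y : L) : ∃ w : L, w ≠ 0 ∧ ⁅x, w⁆ = 0 ∧ ⁅y, w⁆ = 0 := by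
  have hdim : Module.finrank K ((K ∙ Z) × (K ∙ Z)) < Module.finrank K L := by
    have hline : Module.finrank K (K ∙ Z) ≤ 1 := by
      simpa using finrank_span_le_card (R := K) ({Z} : Set L)
    rw [Module.finrank_prod]
    omega
  obtain ⟨w, hw, hw0⟩ := (Submodule.ne_bot_iff _).mp <|
    LinearMap.ker_ne_bot_of_finrank_lt (f := ((ad K L x).codRestrict _ (by simpa using hZ x)).prod
      ((ad K L y).codRestrict _ (by simpa using hZ y))) hdim
  rw [LinearMap.ker_prod, LinearMap.ker_codRestrict, LinearMap.ker_codRestrict] at hw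
  simp only [Submodule.mem_inf, LinearMap.mem_ker, ad_apply] at hw
  exact ⟨w, hw0, hw⟩

variable (K) in
theorem linearIndependent_of_lie_eq_self {Z E W : L} (hZ0 : Z ≠ 0) (hW0 : W ≠ 0)
    (hZE : ⁅Z, E⁆ = Z) (hZW : ⁅Z, W⁆ = 0) (hEW : ⁅E, W⁆ = 0) :
    LinearIndependent K ![Z, E, W] := by
  rw [Fintype.linearIndependent_iff]
  intro g hg
  simp only [Fin.sum_univ_three, Matrix.cons_val_zero, Matrix.cons_val_one,
    Matrix.cons_val_two, Matrix.head_cons, Matrix.tail_cons] at hg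
  have hg1 : g 1 = 0 := by
    have h := congrArg (⁅Z, ·⁆) hg
    simp only [lie_add, lie_smul, lie_self, hZE, hZW, smul_zero, add_zero, zero_add,
      lie_zero] at h
    exact (smul_eq_zero.mp h).resolve_right hZ0
  have hg0 : g 0 = 0 := by
    have h := congrArg (⁅E, ·⁆) hg
    simp only [lie_add, lie_smul, lie_self, hEW, ← lie_skew E Z, hZE, smul_zero, add_zero,
      lie_zero, smul_neg, neg_eq_zero] at h
    exact (smul_eq_zero.mp h).resolve_right hZ0
  have hg2 : g 2 = 0 := by
    rw [hg0, hg1, zero_smul, zero_smul, zero_add, zero_add] at hg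
    exact (smul_eq_zero.mp hg).resolve_right hW0
  intro i
  fin_cases i <;> assumption

end LieAlgebra

/-- A real 3-dimensional Lie algebra with 1-dimensional derived algebra which is not
central is isomorphic to `aff(ℝ) ⊕ ℝ`: it admits a basis `E1,E2,E3` with `[E1,E2]=E1`,
`[E1,E3]=0`, `[E2,E3]=0`. -/
theorem dim_derived_one_noncentral_iso_aff_plus_R
    (L : Type*) [LieRing L] [LieAlgebra ℝ L] [FiniteDimensional ℝ L]
    (h3 : Module.finrank ℝ L = 3)
    (h1 : Module.finrank ℝ
      (LieSubmodule.toSubmodule ⁅(⊤ : LieIdeal ℝ L), (⊤ : LieIdeal ℝ L)⁆) = 1)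
    (hnc : ∃ x y z : L, ⁅x, ⁅y, z⁆⁆ ≠ 0) :
    ∃ E : Module.Basis (Fin 3) ℝ L, ⁅E 0, E 1⁆ = E 0 ∧ ⁅E 0, E 2⁆ = 0 ∧ ⁅E 1, E 2⁆ = 0 := by
  obtain ⟨Z, hZ0, hZ⟩ := LieAlgebra.exists_ne_zero_forall_lie_mem_span_singleton h1
  obtain ⟨E, hZE⟩ := LieAlgebra.exists_lie_eq_self_of_lie_lie_ne_zero hZ hnc
  obtain ⟨W, hW0, hZW, hEW⟩ :=
    LieAlgebra.exists_ne_zero_lie_eq_zero_and_lie_eq_zero (by omega) hZ Z E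
  refine ⟨basisOfLinearIndependentOfCardEqFinrank
    (LieAlgebra.linearIndependent_of_lie_eq_self ℝ hZ0 hW0 hZE hZW hEW) (by simp [h3]), ?_⟩
  simpa using ⟨hZE, hZW, hEW⟩
end
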